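/- Let K be a commutative ring, D a K-bialgebra, and E a K-coalgebra that is also a right D-module with K-bilinear action ⋆ satisfying the module-coalgebra condition Δ_E(e ⋆ d) = Δ_E(e) ⋆ Δ_D(d) (where E ⊗ E is a right D ⊗ D-module componentwise). Let f : E → D be a morphism of K-coalgebras and of right D-modules (f(e ⋆ d) = f(e)·d). Define the product e · e′ := e ⋆ f(e′) on E and the coaction ρ := (id_E ⊗ f) ∘ Δ_E : E → E ⊗ D. Then ρ is multiplicative: ρ(e · e′) = ρ(e) · ρ(e′) for all e, e′ ∈ E, where E ⊗ D carries the product (x ⊗ c)·(x′ ⊗ c′) = (x · x′) ⊗ (c·c′); that is, E is a comodule algebra over D. -/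

import Mathlib

open TensorProduct

/-- The componentwise extension of two bilinear maps to tensor products:
`pairMap g g' (a ⊗ a') (b ⊗ b') = (g a b) ⊗ (g' a' b')`. -/
noncomputable def pairMap {K : Type*} [CommRing K]
    {A A' B B' C C' : Type*}
    [AddCommGroup A] [Module K A] [AddCommGroup A'] [Module K A']
    [AddCommGroup B] [Module K B] [AddCommGroup B'] [Module K B']
    [AddCommGroup C] [Module K C] [AddCommGroup C'] [Module K C']
    (g : A →ₗ[K] B →ₗ[K] C) (g' : A' →ₗ[K] B' →ₗ[K] C') :
    A ⊗[K] A' →ₗ[K] B ⊗[K] B' →ₗ[K] C ⊗[K] C' :=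
  TensorProduct.lift (((TensorProduct.mapBilinear (σ₁₂ := RingHom.id K) (M := B) (N := B') (M₂ := C) (N₂ := C')).comp g).compl₂ g')

/-! Both sides are values of `pairMap` at `Δe` and `Δe'`. Since `pairMap` is natural in all its
arguments, the maps `id ⊗ f` and `f ⊗ f` can be pulled into the bilinear maps, and the identity
reduces to `f (e ⋆ f e') = f e * f e'`, which is the `D`-linearity of `f`. -/

section pairMap

variable {K : Type*} [CommRing K]
  {A A' B B' C C' A₀ A₀' B₀ B₀' C₁ C₁' : Type*}
  [AddCommGroup A] [Module K A] [AddCommGroup A'] [Module K A']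
  [AddCommGroup B] [Module K B] [AddCommGroup B'] [Module K B']
  [AddCommGroup C] [Module K C] [AddCommGroup C'] [Module K C']
  [AddCommGroup A₀] [Module K A₀] [AddCommGroup A₀'] [Module K A₀']
  [AddCommGroup B₀] [Module K B₀] [AddCommGroup B₀'] [Module K B₀']
  [AddCommGroup C₁] [Module K C₁] [AddCommGroup C₁'] [Module K C₁']
  (g : A →ₗ[K] B →ₗ[K] C) (g' : A' →ₗ[K] B' →ₗ[K] C')

@[simp]
lemma pairMap_tmul (a : A) (a' : A') (b : B) (b' : B') :
    pairMap g g' (a ⊗ₜ a') (b ⊗ₜ b') = g a b ⊗ₜ g' a' b' := by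
  simp [pairMap, TensorProduct.mapBilinear]

lemma map_pairMap (h : C →ₗ[K] C₁) (h' : C' →ₗ[K] C₁') (x : A ⊗[K] A') (y : B ⊗[K] B') :
    map h h' (pairMap g g' x y) = pairMap (g.compr₂ h) (g'.compr₂ h') x y := by
  change (pairMap g g').compr₂ (map h h') x y = _
  congr 2
  ext; simp

lemma pairMap_map_right (k : B₀ →ₗ[K] B) (k' : B₀' →ₗ[K] B') (x : A ⊗[K] A')
    (y : B₀ ⊗[K] B₀') :
    pairMap g g' x (map k k' y) = pairMap (g.compl₂ k) (g'.compl₂ k') x y := by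
  change (pairMap g g').compl₂ (map k k') x y = _
  congr 2
  ext; simp

lemma pairMap_map_left (k : A₀ →ₗ[K] A) (k' : A₀' →ₗ[K] A') (x : A₀ ⊗[K] A₀') :
    pairMap g g' (map k k' x) = pairMap (g ∘ₗ k) (g' ∘ₗ k') x := by
  change (pairMap g g' ∘ₗ map k k') x = _
  congr 1
  ext; simp

end pairMap

theorem coaction_comodule_algebra_general
    {K D E : Type*} [CommRing K] [Ring D] [Bialgebra K D]
    [AddCommGroup E] [Module K E] [Coalgebra K E]
    (star : E →ₗ[K] D →ₗ[K] E)
    (hmodcoalg : ∀ (e : E) (d : D),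
      Coalgebra.comul (R := K) (star e d) =
        pairMap star star (Coalgebra.comul (R := K) e) (Coalgebra.comul (R := K) d))
    (f : E →ₗ[K] D)
    (hf_comul : TensorProduct.map f f ∘ₗ Coalgebra.comul (R := K) (A := E) =
        Coalgebra.comul (R := K) (A := D) ∘ₗ f)
    (hf_mod : ∀ (e : E) (d : D), f (star e d) = f e * d) :
    ∀ ρ : E →ₗ[K] E ⊗[K] D,
      ρ = TensorProduct.map LinearMap.id f ∘ₗ Coalgebra.comul (R := K) →
      ∀ e e' : E,
        ρ (star e (f e')) =
          pairMap (star.compl₂ f) (LinearMap.mul K D) (ρ e) (ρ e') := by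
  rintro ρ rfl e e'
  have hf_mul : star.compr₂ f = LinearMap.mul K D ∘ₗ f := by
    ext; simp [hf_mod]
  set Δe := Coalgebra.comul (R := K) e
  set Δe' := Coalgebra.comul (R := K) e'
  have hΔf : Coalgebra.comul (f e') = map f f Δe' := (LinearMap.congr_fun hf_comul e').symm
  calc map LinearMap.id f (Coalgebra.comul (star e (f e')))
      = map LinearMap.id f (pairMap star star Δe (map f f Δe')) := by
        rw [hmodcoalg, hΔf]
    _ = pairMap (star.compl₂ f) ((star.compr₂ f).compl₂ f) Δe Δe' := by
        rw [map_pairMap, pairMap_map_right, LinearMap.compr₂_id]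
    _ = pairMap (star.compl₂ f) (LinearMap.mul K D) (map LinearMap.id f Δe)
          (map LinearMap.id f Δe') := by
        rw [pairMap_map_right, pairMap_map_left, LinearMap.compl₂_id, LinearMap.comp_id, hf_mul]
        rfl

/-- if `E` is a right `D`-module coalgebra over a bialgebra `D` and
`f : E → D` is a morphism of coalgebras and of right `D`-modules, then the coaction
`ρ := (id_E ⊗ f) ∘ Δ_E` is multiplicative for the product `e · e' := e ⋆ f e'`:
`ρ (e · e') = ρ e · ρ e'`, where `E ⊗ D` carries the componentwise product
`(x ⊗ c) · (x' ⊗ c') = (x · x') ⊗ (c * c')`; i.e. `E` is a comodule algebra over `D`. -/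
theorem coaction_comodule_algebra
    {K D E : Type*} [CommRing K] [Ring D] [Bialgebra K D]
    [AddCommGroup E] [Module K E] [Coalgebra K E]
    (star : E →ₗ[K] D →ₗ[K] E)
    (hstar_mul : ∀ (e : E) (d d' : D), star e (d * d') = star (star e d) d')
    (hstar_one : ∀ e : E, star e 1 = e)
    (hmodcoalg : ∀ (e : E) (d : D),
      Coalgebra.comul (R := K) (star e d) =
        pairMap star star (Coalgebra.comul (R := K) e) (Coalgebra.comul (R := K) d))
    (f : E →ₗ[K] D)
    (hf_comul : TensorProduct.map f f ∘ₗ Coalgebra.comul (R := K) (A := E) =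
        Coalgebra.comul (R := K) (A := D) ∘ₗ f)
    (hf_counit : Coalgebra.counit (R := K) (A := D) ∘ₗ f =
        Coalgebra.counit (R := K) (A := E))
    (hf_mod : ∀ (e : E) (d : D), f (star e d) = f e * d) :
    ∀ ρ : E →ₗ[K] E ⊗[K] D,
      ρ = TensorProduct.map LinearMap.id f ∘ₗ Coalgebra.comul (R := K) →
      ∀ e e' : E,
        ρ (star e (f e')) =
          pairMap (star.compl₂ f) (LinearMap.mul K D) (ρ e) (ρ e') :=
  coaction_comodule_algebra_general star hmodcoalg f hf_comul hf_mod
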